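/- arXiv:2605.25180 — 3 statements merged into one kernel-verified Lean document; each statement's English description precedes it below -/
import Mathlib

section
/- Normalization of day addition: for every valid date D = (y, m, d) and every integer n, the small-step day-addition rules terminate; that is, there exists a unique valid date D' such that D +D n reduces in finitely many steps to D'. We write D +D n for this unique normal form. -/
/-- A date is a triple of integers (year, month, day). -/
structure Date where
  y : ℤ
  m : ℤ
  d : ℤ

/-- A year is a leap year iff divisible by 4 and (not by 100, or by 400). -/
def isLeap (y : ℤ) : Prop :=
  y % 4 = 0 ∧ (y % 100 ≠ 0 ∨ y % 400 = 0)

/-- Number of days in month `m` of year `y`. -/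
def nbdays (y m : ℤ) : ℤ :=
  if m = 4 ∨ m = 6 ∨ m = 9 ∨ m = 11 then 30
  else if m = 2 then
    (if y % 4 = 0 ∧ (y % 100 ≠ 0 ∨ y % 400 = 0) then 29 else 28)
  else 31

/-- A date is valid iff `1 ≤ m ≤ 12` and `1 ≤ d ≤ nbdays y m`. -/
def Date.valid (D : Date) : Prop :=
  1 ≤ D.m ∧ D.m ≤ 12 ∧ 1 ≤ D.d ∧ D.d ≤ nbdays D.y D.m

/-- Month addition `(y, m, d) +m n`, with round-down of the day component. -/
def addMonths (D : Date) (n : ℤ) : Date :=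
  ⟨D.y + (D.m - 1 + n) / 12,
   1 + (D.m - 1 + n) % 12,
   min D.d (nbdays (D.y + (D.m - 1 + n) / 12) (1 + (D.m - 1 + n) % 12))⟩

/-- A configuration of the small-step day-addition machine:
either a pending addition `D +D n`, or a finished date. -/
inductive Conf where
  | pending (D : Date) (n : ℤ)
  | done (D : Date)

/-- Small-step rules for day addition `+D`. -/
inductive Step : Conf → Conf → Prop where
  | add_days {y m d n : ℤ}
      (h1 : 1 ≤ d + n) (h2 : d + n ≤ nbdays y m) :
      Step (Conf.pending ⟨y, m, d⟩ n) (Conf.done ⟨y, m, d + n⟩)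
  | add_days_over {y m d n : ℤ}
      (h : d + n > nbdays y m) :
      Step (Conf.pending ⟨y, m, d⟩ n)
        (Conf.pending (addMonths ⟨y, m, 1⟩ 1) (n - (nbdays y m - d) - 1))
  | add_days_under1 {y m d n : ℤ}
      (h1 : 1 < d) (h2 : d + n ≤ 0) :
      Step (Conf.pending ⟨y, m, d⟩ n) (Conf.pending ⟨y, m, 1⟩ (d - 1 + n))
  | add_days_under2 {y m n y' m' : ℤ}
      (h1 : 1 + n ≤ 0) (h2 : addMonths ⟨y, m, 1⟩ (-1) = ⟨y', m', 1⟩) :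
      Step (Conf.pending ⟨y, m, 1⟩ n) (Conf.pending ⟨y', m', 1⟩ (n + nbdays y' m'))

/-- Reduction in finitely many steps. -/
def Reduces : Conf → Conf → Prop := Relation.ReflTransGen Step

instance : Nonempty Date := ⟨⟨2000, 3, 1⟩⟩

/-- `addDays D n` is the unique valid normal form of `D +D n`
(when it exists; arbitrary otherwise). -/
noncomputable def addDays (D : Date) (n : ℤ) : Date :=
  Classical.epsilon fun D' : Date =>
    D'.valid ∧ Reduces (Conf.pending D n) (Conf.done D')

/-- Date-period addition `D +P (ny, nm, nd) = (D +m (12·ny + nm)) +D nd`. -/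
noncomputable def addPeriod (D : Date) (P : ℤ × ℤ × ℤ) : Date :=
  addDays (addMonths D (12 * P.1 + P.2.1)) P.2.2

/-- Lexicographic order on dates. -/
def Date.le (a b : Date) : Prop :=
  a.y < b.y ∨ (a.y = b.y ∧ a.m < b.m) ∨ (a.y = b.y ∧ a.m = b.m ∧ a.d ≤ b.d)

/-- Strict lexicographic order on dates. -/
def Date.lt (a b : Date) : Prop :=
  a.y < b.y ∨ (a.y = b.y ∧ a.m < b.m) ∨ (a.y = b.y ∧ a.m = b.m ∧ a.d < b.d)

/-- The epoch date: March 1, 2000. -/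
def epoch : Date := ⟨2000, 3, 1⟩

/-- `toDelta D` is the unique integer `n` with `epoch +D n = D`
(when it exists; arbitrary otherwise). -/
noncomputable def toDelta (D : Date) : ℤ :=
  Classical.epsilon fun n : ℤ => addDays epoch n = D

/-!
The step relation is deterministic and `done` configurations are stuck, so a configuration
reduces to at most one finished date. For existence, each rule keeps the date valid, and the
number `|n|` of days still to add strictly decreases, except when a backward step into the
previous month already lands inside it; that step is then followed by a finishing one.
-/

lemma nbdays_pos (y m : ℤ) : 0 < nbdays y m := by
  unfold nbdays; split_ifs <;> norm_num

lemma exists_addMonths_one_eq (y m k : ℤ) :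
    ∃ y' m', addMonths ⟨y, m, 1⟩ k = ⟨y', m', 1⟩ ∧ (Date.mk y' m' 1).valid := by
  have hmod := Int.emod_nonneg (m - 1 + k) (by norm_num : (12 : ℤ) ≠ 0)
  have hlt := Int.emod_lt_of_pos (m - 1 + k) (by norm_num : (0 : ℤ) < 12)
  have hpos := nbdays_pos (y + (m - 1 + k) / 12) (1 + (m - 1 + k) % 12)
  refine ⟨y + (m - 1 + k) / 12, 1 + (m - 1 + k) % 12, ?_, ?_⟩
  · simp only [addMonths]
    congr 1
    omega
  · refine ⟨?_, ?_, le_rfl, hpos⟩ <;> dsimp only <;> omega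

lemma Step.deterministic {a b c : Conf} (hb : Step a b) (hc : Step a c) : b = c := by
  cases hb with
  | @add_days y m d n =>
    cases hc <;> first | rfl | omega
  | @add_days_over y m d n =>
    have := nbdays_pos y m
    cases hc <;> first | rfl | omega
  | @add_days_under1 y m d n =>
    have := nbdays_pos y m
    cases hc <;> first | rfl | omega
  | @add_days_under2 y m n y₁ m₁ _ h₁ =>
    have := nbdays_pos y m
    cases hc with
    | add_days_under2 _ h₂ =>
      rw [h₁] at h₂
      cases h₂
      rfl
    | _ => omega

lemma Reduces.done_unique {c : Conf} {D₁ D₂ : Date}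
    (h₁ : Reduces c (Conf.done D₁)) (h₂ : Reduces c (Conf.done D₂)) : D₁ = D₂ := by
  induction h₁ using Relation.ReflTransGen.head_induction_on with
  | refl =>
    rcases Relation.ReflTransGen.cases_head h₂ with h | ⟨_, hs, _⟩
    · cases h; rfl
    · cases hs
  | head hs _ ih =>
    rcases Relation.ReflTransGen.cases_head h₂ with rfl | ⟨_, hs', hr'⟩
    · cases hs
    · exact ih (Step.deterministic hs hs' ▸ hr')

lemma Reduces.progress {D : Date} (hD : D.valid) (n : ℤ) :
    (∃ D', D'.valid ∧ Reduces (Conf.pending D n) (Conf.done D')) ∨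
    ∃ D' n', D'.valid ∧ n'.natAbs < n.natAbs ∧
      Reduces (Conf.pending D n) (Conf.pending D' n') := by
  obtain ⟨y, m, d⟩ := D
  obtain ⟨hm₁, hm₂, hd₁, hd₂⟩ := hD
  dsimp only at hm₁ hm₂ hd₁ hd₂
  have hnb := nbdays_pos y m
  by_cases hin : 1 ≤ d + n ∧ d + n ≤ nbdays y m
  · exact .inl ⟨_, ⟨hm₁, hm₂, hin⟩, .single (Step.add_days hin.1 hin.2)⟩
  by_cases hover : d + n > nbdays y m
  · obtain ⟨y', m', heq, hval⟩ := exists_addMonths_one_eq y m 1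
    refine .inr ⟨⟨y', m', 1⟩, n - (nbdays y m - d) - 1, hval, by omega, .single ?_⟩
    simpa only [heq] using Step.add_days_over (y := y) (m := m) (d := d) (n := n) hover
  by_cases hd : 1 < d
  · exact .inr ⟨⟨y, m, 1⟩, d - 1 + n, ⟨hm₁, hm₂, le_rfl, hnb⟩, by omega,
      .single (Step.add_days_under1 hd (by omega))⟩
  obtain rfl : d = 1 := by omega
  obtain ⟨y', m', heq, hval⟩ := exists_addMonths_one_eq y m (-1)
  have hback := Step.add_days_under2 (n := n) (by omega) heq
  have hnb' := nbdays_pos y' m'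
  by_cases hlands : 0 ≤ n + nbdays y' m'
  · refine .inl ⟨⟨y', m', 1 + (n + nbdays y' m')⟩, ⟨hval.1, hval.2.1, ?_, ?_⟩,
      .head hback (.single (Step.add_days (by omega) (by omega)))⟩ <;> dsimp only <;> omega
  · exact .inr ⟨⟨y', m', 1⟩, n + nbdays y' m', hval, by omega, .single hback⟩

lemma exists_reduces_done {D : Date} (hD : D.valid) (n : ℤ) :
    ∃ D', D'.valid ∧ Reduces (Conf.pending D n) (Conf.done D') := by
  induction h : n.natAbs using Nat.strong_induction_on generalizing D n with
  | _ k ih =>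
    rcases Reduces.progress hD n with hdone | ⟨D', n', hD', hlt, hred⟩
    · exact hdone
    · obtain ⟨E, hE, hredE⟩ := ih _ (h ▸ hlt) hD' n' rfl
      exact ⟨E, hE, hred.trans hredE⟩

/-- **Normalization of day addition**: for every valid date `D` and every integer `n`,
the small-step day-addition rules terminate: there exists a unique valid date `D'` such
that `D +D n` reduces in finitely many steps to `D'`. -/
theorem dayAddition_normalization (D : Date) (hD : D.valid) (n : ℤ) :
    ∃! D' : Date, D'.valid ∧ Reduces (Conf.pending D n) (Conf.done D') := by
  obtain ⟨D', hD', hred⟩ := exists_reduces_done hD n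
  exact ⟨D', ⟨hD', hred⟩, fun _ ⟨_, hredE⟩ => hredE.done_unique hred⟩
end

section
/- Monotonicity of date-period addition: for any two valid dates D1 and D2 and any period P = (ny, nm, nd) ∈ ℤ³, if D1 ≤ D2 then (D1 +P P) ≤ (D2 +P P). -/
-- auxiliary development
def lc (y : ℤ) : ℤ := y / 4 - y / 100 + y / 400

def cum (m : ℤ) : ℤ :=
  if m = 1 then 0 else if m = 2 then 31 else if m = 3 then 59 else if m = 4 then 90
  else if m = 5 then 120 else if m = 6 then 151 else if m = 7 then 181
  else if m = 8 then 212 else if m = 9 then 243 else if m = 10 then 273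
  else if m = 11 then 304 else 334

def toNum (D : Date) : ℤ :=
  365 * D.y + (if D.m ≤ 2 then lc (D.y - 1) else lc D.y) + cum D.m + D.d

lemma nbdays_bounds (y m : ℤ) : 28 ≤ nbdays y m ∧ nbdays y m ≤ 31 := by
  unfold nbdays; split_ifs <;> omega

lemma lc_step (y : ℤ) :
    lc y = lc (y - 1) + (if y % 4 = 0 ∧ (y % 100 ≠ 0 ∨ y % 400 = 0) then 1 else 0) := by
  unfold lc; split_ifs with h
  · omega
  · omega

lemma month_succ (y m : ℤ) (hm1 : 1 ≤ m) (hm2 : m ≤ 12) :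
    toNum ⟨y + m / 12, 1 + m % 12, 1⟩ = toNum ⟨y, m, 1⟩ + nbdays y m := by
  have hls := lc_step y
  interval_cases m <;>
    simp only [toNum, cum, nbdays, lc] at * <;> norm_num at * <;> split_ifs at * <;> omega
lemma addMonths_one' (y m : ℤ) :
    addMonths ⟨y, m, 1⟩ 1 = ⟨y + m / 12, 1 + m % 12, 1⟩ := by
  simp only [addMonths]
  have e : m - 1 + 1 = m := by ring
  rw [e]
  have : min (1:ℤ) (nbdays (y + m / 12) (1 + m % 12)) = 1 := by
    have := nbdays_bounds (y + m / 12) (1 + m % 12); omega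
  rw [this]

def cval : Conf → ℤ
  | .pending D n => toNum D + n
  | .done E => toNum E

def cok : Conf → Prop
  | .pending D _ => D.valid
  | .done E => E.valid

lemma toNum_day (y m d : ℤ) : toNum ⟨y, m, d⟩ = toNum ⟨y, m, 1⟩ + d - 1 := by
  simp only [toNum]; ring

lemma valid_mk (y m d : ℤ) :
    (Date.mk y m d).valid ↔ 1 ≤ m ∧ m ≤ 12 ∧ 1 ≤ d ∧ d ≤ nbdays y m := Iff.rfl

lemma step_pres {c c' : Conf} (h : Step c c') (hok : cok c) :
    cok c' ∧ cval c' = cval c := by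
  cases h with
  | @add_days y m d n h1 h2 =>
      simp only [cok, valid_mk] at hok ⊢
      obtain ⟨hm1, hm2, hd1, hd2⟩ := hok
      refine ⟨⟨hm1, hm2, h1, h2⟩, ?_⟩
      simp only [cval, toNum]; ring
  | @add_days_over y m d n h =>
      simp only [cok, valid_mk] at hok
      obtain ⟨hm1, hm2, hd1, hd2⟩ := hok
      rw [addMonths_one']
      have hnb := nbdays_bounds (y + m / 12) (1 + m % 12)
      simp only [cok, valid_mk, cval]
      refine ⟨⟨by omega, by omega, by omega, by omega⟩, ?_⟩
      rw [month_succ y m hm1 hm2, toNum_day y m d]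
      ring
  | @add_days_under1 y m d n h1 h2 =>
      simp only [cok, valid_mk] at hok
      obtain ⟨hm1, hm2, hd1, hd2⟩ := hok
      have hnb := nbdays_bounds y m
      simp only [cok, valid_mk, cval]
      refine ⟨⟨hm1, hm2, le_refl 1, by omega⟩, ?_⟩
      rw [toNum_day y m d]; ring
  | @add_days_under2 y m n y' m' h1 h2 =>
      simp only [cok, valid_mk] at hok
      obtain ⟨hm1, hm2, hd1, hd2⟩ := hok
      have e : m - 1 + -1 = m - 2 := by ring
      simp only [addMonths, e] at h2
      have hy' : y' = y + (m - 2) / 12 := by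
        have := congrArg Date.y h2; simpa using this.symm
      have hm' : m' = 1 + (m - 2) % 12 := by
        have := congrArg Date.m h2; simpa using this.symm
      have hm'1 : 1 ≤ m' := by omega
      have hm'2 : m' ≤ 12 := by omega
      have hnb := nbdays_bounds y' m'
      simp only [cok, valid_mk, cval]
      refine ⟨⟨hm'1, hm'2, le_refl 1, by omega⟩, ?_⟩
      have hsucc := month_succ y' m' hm'1 hm'2
      have hy : y' + m' / 12 = y := by omega
      have hmm : 1 + m' % 12 = m := by omega
      rw [hy, hmm] at hsucc
      omega

lemma reduces_pres {c c' : Conf} (h : Reduces c c') (hok : cok c) :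
    cok c' ∧ cval c' = cval c := by
  induction h with
  | refl => exact ⟨hok, rfl⟩
  | tail h1 h2 ih =>
      obtain ⟨hok', hval⟩ := ih
      obtain ⟨hok'', hval'⟩ := step_pres h2 hok'
      exact ⟨hok'', by omega⟩
lemma terminates_aux : ∀ k : ℕ, ∀ y m d n : ℤ, (Date.mk y m d).valid → n.natAbs ≤ k →
    ∃ E : Date, E.valid ∧ Reduces (Conf.pending ⟨y, m, d⟩ n) (Conf.done E) := by
  intro k
  induction k with
  | zero =>
      intro y m d n hv hn
      have hn0 : n = 0 := by omega
      subst hn0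
      rw [valid_mk] at hv
      exact ⟨⟨y, m, d + 0⟩, by rw [valid_mk]; exact ⟨hv.1, hv.2.1, by omega, by omega⟩,
        Relation.ReflTransGen.single (Step.add_days (by omega) (by omega))⟩
  | succ k ih =>
      intro y m d n hv hn
      rw [valid_mk] at hv
      obtain ⟨hm1, hm2, hd1, hd2⟩ := hv
      have hnb := nbdays_bounds y m
      by_cases hin : 1 ≤ d + n ∧ d + n ≤ nbdays y m
      · exact ⟨⟨y, m, d + n⟩, by rw [valid_mk]; exact ⟨hm1, hm2, hin.1, hin.2⟩,
          Relation.ReflTransGen.single (Step.add_days hin.1 hin.2)⟩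
      · by_cases hov : d + n > nbdays y m
        · -- overflow case
          have hstep := @Step.add_days_over y m d n hov
          rw [addMonths_one'] at hstep
          have hnb' := nbdays_bounds (y + m / 12) (1 + m % 12)
          have hv' : (Date.mk (y + m / 12) (1 + m % 12) 1).valid := by
            rw [valid_mk]; exact ⟨by omega, by omega, le_refl 1, by omega⟩
          have hbound : (n - (nbdays y m - d) - 1).natAbs ≤ k := by omega
          obtain ⟨E, hEv, hEr⟩ := ih _ _ _ _ hv' hbound
          exact ⟨E, hEv, Relation.ReflTransGen.head hstep hEr⟩
        · -- underflow: d + n ≤ 0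
          have hun : d + n ≤ 0 := by omega
          by_cases hd : 1 < d
          · have hstep := @Step.add_days_under1 y m d n hd hun
            have hv' : (Date.mk y m 1).valid := by
              rw [valid_mk]; exact ⟨hm1, hm2, le_refl 1, by omega⟩
            have hbound : (d - 1 + n).natAbs ≤ k := by omega
            obtain ⟨E, hEv, hEr⟩ := ih _ _ _ _ hv' hbound
            exact ⟨E, hEv, Relation.ReflTransGen.head hstep hEr⟩
          · have hd1' : d = 1 := by omega
            subst hd1'
            obtain ⟨y', m', hy', hm'⟩ :
                ∃ y' m' : ℤ, y' = y + (m - 2) / 12 ∧ m' = 1 + (m - 2) % 12 :=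
              ⟨y + (m - 2) / 12, 1 + (m - 2) % 12, rfl, rfl⟩
            have h2 : addMonths ⟨y, m, 1⟩ (-1) = ⟨y', m', 1⟩ := by
              rw [hy', hm']
              simp only [addMonths]
              have e : m - 1 + -1 = m - 2 := by ring
              rw [e]
              have : min (1:ℤ) (nbdays (y + (m - 2) / 12) (1 + (m - 2) % 12)) = 1 := by
                have := nbdays_bounds (y + (m - 2) / 12) (1 + (m - 2) % 12); omega
              rw [this]
            have hstep := @Step.add_days_under2 y m n y' m' (by omega) h2
            have hnb' := nbdays_bounds y' m'
            have hv' : (Date.mk y' m' 1).valid := by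
              rw [valid_mk]; exact ⟨by omega, by omega, le_refl 1, by omega⟩
            by_cases hpos : 0 ≤ n + nbdays y' m'
            · -- one more step finishes
              refine ⟨⟨y', m', 1 + (n + nbdays y' m')⟩, ?_, ?_⟩
              · rw [valid_mk]; exact ⟨by omega, by omega, by omega, by omega⟩
              · exact Relation.ReflTransGen.head hstep
                  (Relation.ReflTransGen.single (Step.add_days (by omega) (by omega)))
            · push_neg at hpos
              have hbound : (n + nbdays y' m').natAbs ≤ k := by omega
              obtain ⟨E, hEv, hEr⟩ := ih _ _ _ _ hv' hbound
              exact ⟨E, hEv, Relation.ReflTransGen.head hstep hEr⟩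

lemma terminates (D : Date) (hD : D.valid) (n : ℤ) :
    ∃ E : Date, E.valid ∧ Reduces (Conf.pending D n) (Conf.done E) := by
  obtain ⟨y, m, d⟩ := D
  exact terminates_aux n.natAbs y m d n hD le_rfl
lemma month_succ' (y m : ℤ) (hm1 : 1 ≤ m) (hm2 : m ≤ 11) :
    toNum ⟨y, m + 1, 1⟩ = toNum ⟨y, m, 1⟩ + nbdays y m := by
  have h := month_succ y m hm1 (by omega)
  have e1 : y + m / 12 = y := by omega
  have e2 : 1 + m % 12 = m + 1 := by omega
  rw [e1, e2] at h
  exact h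

lemma month_chain (y a b : ℤ) (ha : 1 ≤ a) (hab : a < b) (hb : b ≤ 12) :
    toNum ⟨y, a, 1⟩ + nbdays y a ≤ toNum ⟨y, b, 1⟩ := by
  have key : ∀ b : ℤ, a + 1 ≤ b → b ≤ 12 → toNum ⟨y, a, 1⟩ + nbdays y a ≤ toNum ⟨y, b, 1⟩ := by
    intro b hb1
    refine Int.le_induction
      (motive := fun n _ => n ≤ 12 → toNum ⟨y, a, 1⟩ + nbdays y a ≤ toNum ⟨y, n, 1⟩) ?_ ?_ b hb1
    · show a + 1 ≤ 12 → _
      intro _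
      show toNum ⟨y, a, 1⟩ + nbdays y a ≤ toNum ⟨y, a + 1, 1⟩
      rw [month_succ' y a ha (by omega)]
    · intro b hb ih hb12
      have h1 := ih (by omega)
      have h2 := month_succ' y b (by omega) (by omega)
      have h3 := nbdays_bounds y b
      omega
  exact key b (by omega) hb

lemma year_succ (y : ℤ) : toNum ⟨y + 1, 1, 1⟩ = toNum ⟨y, 12, 31⟩ + 1 := by
  have h := month_succ y 12 (by norm_num) (by norm_num)
  norm_num at h
  have e : nbdays y 12 = 31 := by norm_num [nbdays]
  rw [e] at h
  rw [h, toNum_day y 12 31]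
  ring

lemma toNum_le_hi (y m d : ℤ) (hv : (Date.mk y m d).valid) :
    toNum ⟨y, m, d⟩ ≤ toNum ⟨y, 12, 31⟩ := by
  rw [valid_mk] at hv
  obtain ⟨hm1, hm2, hd1, hd2⟩ := hv
  rw [toNum_day y m d, toNum_day y 12 31]
  by_cases h12 : m = 12
  · subst h12
    have : nbdays y 12 = 31 := by norm_num [nbdays]
    omega
  · have hc := month_chain y m 12 hm1 (by omega) le_rfl
    omega

lemma toNum_ge_lo (y m d : ℤ) (hv : (Date.mk y m d).valid) :
    toNum ⟨y, 1, 1⟩ ≤ toNum ⟨y, m, d⟩ := by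
  rw [valid_mk] at hv
  obtain ⟨hm1, hm2, hd1, hd2⟩ := hv
  rw [toNum_day y m d]
  by_cases h1 : m = 1
  · subst h1; omega
  · have hc := month_chain y 1 m le_rfl (by omega) hm2
    have := nbdays_bounds y 1
    omega

lemma year_lt (ya yb : ℤ) (h : ya < yb) : toNum ⟨ya, 12, 31⟩ < toNum ⟨yb, 1, 1⟩ := by
  have key : ∀ yb : ℤ, ya + 1 ≤ yb → toNum ⟨ya, 12, 31⟩ < toNum ⟨yb, 1, 1⟩ := by
    intro yb hyb
    refine Int.le_induction
      (motive := fun n _ => toNum ⟨ya, 12, 31⟩ < toNum ⟨n, 1, 1⟩) ?_ ?_ yb hyb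
    · show toNum ⟨ya, 12, 31⟩ < toNum ⟨ya + 1, 1, 1⟩
      rw [year_succ ya]; omega
    · intro yb hyb2 ih
      have h1 := year_succ yb
      have hv : (Date.mk yb 1 1).valid := by
        rw [valid_mk]
        have := nbdays_bounds yb 1
        exact ⟨le_rfl, by norm_num, le_rfl, by omega⟩
      have h2 := toNum_le_hi yb 1 1 hv
      omega
  exact key yb (by omega)

lemma toNum_strictMono (a b : Date) (ha : a.valid) (hb : b.valid) (hlt : Date.lt a b) :
    toNum a < toNum b := by
  obtain ⟨y1, m1, d1⟩ := a
  obtain ⟨y2, m2, d2⟩ := b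
  have ha' := ha; have hb' := hb
  rw [valid_mk] at ha' hb'
  dsimp only [Date.lt] at hlt
  rcases hlt with hy | ⟨hy, hm⟩ | ⟨hy, hm, hd⟩
  · have h1 := toNum_le_hi y1 m1 d1 ha
    have h2 := toNum_ge_lo y2 m2 d2 hb
    have h3 := year_lt y1 y2 hy
    omega
  · subst hy
    have hc := month_chain y1 m1 m2 ha'.1 hm hb'.2.1
    have e1 := toNum_day y1 m1 d1
    have e2 := toNum_day y1 m2 d2
    omega
  · subst hy; subst hm
    have e1 := toNum_day y1 m1 d1
    have e2 := toNum_day y1 m1 d2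
    omega

lemma le_of_toNum_le (a b : Date) (ha : a.valid) (hb : b.valid) (h : toNum a ≤ toNum b) :
    Date.le a b := by
  by_contra hc
  have hlt : Date.lt b a := by
    dsimp only [Date.le] at hc
    dsimp only [Date.lt]
    omega
  have := toNum_strictMono b a hb ha hlt
  omega
lemma addMonths_valid (D : Date) (hD : D.valid) (K : ℤ) : (addMonths D K).valid := by
  obtain ⟨y, m, d⟩ := D
  rw [valid_mk] at hD
  have hnb := nbdays_bounds (y + (m - 1 + K) / 12) (1 + (m - 1 + K) % 12)
  simp only [addMonths, valid_mk]
  refine ⟨by omega, by omega, ?_, min_le_right _ _⟩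
  rw [le_min_iff]
  exact ⟨hD.2.2.1, by omega⟩

lemma addMonths_mono (D1 D2 : Date) (h1 : D1.valid) (h2 : D2.valid) (K : ℤ)
    (hle : Date.le D1 D2) : toNum (addMonths D1 K) ≤ toNum (addMonths D2 K) := by
  have hv1 := addMonths_valid D1 h1 K
  have hv2 := addMonths_valid D2 h2 K
  obtain ⟨y1, m1, d1⟩ := D1
  obtain ⟨y2, m2, d2⟩ := D2
  rw [valid_mk] at h1 h2
  dsimp only [Date.le] at hle
  by_cases ht : 12 * y1 + m1 = 12 * y2 + m2
  · -- same total month index: components of addMonths agree except day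
    have hd : d1 ≤ d2 := by omega
    have ey : y1 + (m1 - 1 + K) / 12 = y2 + (m2 - 1 + K) / 12 := by omega
    have em : 1 + (m1 - 1 + K) % 12 = 1 + (m2 - 1 + K) % 12 := by omega
    simp only [addMonths]
    rw [ey, em]
    have hmin : min d1 (nbdays (y2 + (m2 - 1 + K) / 12) (1 + (m2 - 1 + K) % 12)) ≤
        min d2 (nbdays (y2 + (m2 - 1 + K) / 12) (1 + (m2 - 1 + K) % 12)) :=
      min_le_min hd le_rfl
    rw [toNum_day _ _ (min d1 _), toNum_day _ _ (min d2 _)]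
    omega
  · -- strictly smaller total month index
    have htlt : 12 * y1 + m1 < 12 * y2 + m2 := by omega
    have hlt : Date.lt (addMonths ⟨y1, m1, d1⟩ K) (addMonths ⟨y2, m2, d2⟩ K) := by
      simp only [addMonths]
      dsimp only [Date.lt]
      omega
    exact le_of_lt (toNum_strictMono _ _ hv1 hv2 hlt)

lemma addDays_spec (D : Date) (hD : D.valid) (n : ℤ) :
    (addDays D n).valid ∧ toNum (addDays D n) = toNum D + n := by
  obtain ⟨E, hEv, hEr⟩ := terminates D hD n
  have hspec : (addDays D n).valid ∧ Reduces (Conf.pending D n) (Conf.done (addDays D n)) :=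
    Classical.epsilon_spec (p := fun D' : Date =>
      D'.valid ∧ Reduces (Conf.pending D n) (Conf.done D')) ⟨E, hEv, hEr⟩
  have hp := reduces_pres hspec.2 (show cok (Conf.pending D n) from hD)
  exact ⟨hspec.1, by simpa [cval] using hp.2⟩


/-- **Monotonicity of date-period addition**: for valid dates `D1 ≤ D2` and any period
`(ny, nm, nd)`, we have `D1 +P P ≤ D2 +P P`. -/
theorem addPeriod_mono (D1 D2 : Date) (h1 : D1.valid) (h2 : D2.valid)
    (ny nm nd : ℤ) (hle : Date.le D1 D2) :
    Date.le (addPeriod D1 (ny, nm, nd)) (addPeriod D2 (ny, nm, nd)) := by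
  have hA1v := addMonths_valid D1 h1 (12 * ny + nm)
  have hA2v := addMonths_valid D2 h2 (12 * ny + nm)
  have hAm := addMonths_mono D1 D2 h1 h2 (12 * ny + nm) hle
  have hs1 := addDays_spec _ hA1v nd
  have hs2 := addDays_spec _ hA2v nd
  have hR1 : addPeriod D1 (ny, nm, nd) = addDays (addMonths D1 (12 * ny + nm)) nd := rfl
  have hR2 : addPeriod D2 (ny, nm, nd) = addDays (addMonths D2 (12 * ny + nm)) nd := rfl
  rw [hR1, hR2]
  exact le_of_toNum_le _ _ hs1.1 hs2.1 (by omega)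
end

section
/- Monotonicity of date-period addition is not strict: there exist valid dates D1 and D2 and a period P with D1 < D2 but (D1 +P P) = (D2 +P P). In particular, for D1 = (2020, 1, 30), D2 = (2020, 1, 31), and P = (0, 1, 0), we have D1 < D2 and D1 +P P = D2 +P P = (2020, 2, 29). -/
/- The day component of `addMonths` is clamped to the length of the target month, so two valid
dates of January that both exceed the length of February are sent by `+m 1` to the same last
day of February; adding zero days then changes nothing. -/

lemma nbdays_ge_28 (y m : ℤ) : 28 ≤ nbdays y m := by
  unfold nbdays
  split_ifs <;> norm_num

lemma nbdays_two_of_isLeap {y : ℤ} (hy : isLeap y) : nbdays y 2 = 29 := by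
  rw [nbdays, if_neg (by norm_num), if_pos rfl]
  exact if_pos hy

lemma addMonths_valid_s5 {D : Date} (hd : 1 ≤ D.d) (n : ℤ) : (addMonths D n).valid := by
  refine ⟨by simp only [addMonths]; omega, by simp only [addMonths]; omega, ?_, min_le_right _ _⟩
  exact le_min hd (by linarith [nbdays_ge_28 (D.y + (D.m - 1 + n) / 12) (1 + (D.m - 1 + n) % 12)])

lemma Step.not_done {D : Date} {c : Conf} : ¬ Step (Conf.done D) c := nofun

lemma Reduces.eq_of_done {D : Date} {c : Conf} (h : Reduces (Conf.done D) c) : c = Conf.done D := by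
  induction h with
  | refl => rfl
  | tail _ hstep ih => subst ih; exact absurd hstep Step.not_done

lemma Step.pending_zero {D : Date} (hD : D.valid) {c : Conf} (h : Step (Conf.pending D 0) c) :
    c = Conf.done D := by
  obtain ⟨y, m, d⟩ := D
  obtain ⟨-, -, hd, hdm⟩ := hD
  cases h with
  | add_days => simp
  | add_days_over h => simp only at hdm; omega
  | add_days_under1 _ h => simp only at hd; omega
  | add_days_under2 h => omega

lemma Reduces.eq_of_pending_zero {D D' : Date} (hD : D.valid)
    (h : Reduces (Conf.pending D 0) (Conf.done D')) : D' = D := by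
  obtain heq | ⟨c, hstep, hrest⟩ := Relation.ReflTransGen.cases_head h
  · cases heq
  · rw [Step.pending_zero hD hstep] at hrest
    simpa using Reduces.eq_of_done hrest

lemma addDays_zero {D : Date} (hD : D.valid) : addDays D 0 = D := by
  have hex : ∃ D' : Date, D'.valid ∧ Reduces (Conf.pending D 0) (Conf.done D') := by
    refine ⟨D, hD, .single ?_⟩
    simpa using Step.add_days (y := D.y) (m := D.m) (n := 0)
      (by linarith [hD.2.2.1]) (by linarith [hD.2.2.2])
  exact Reduces.eq_of_pending_zero hD (Classical.epsilon_spec hex).2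

lemma addPeriod_days_zero {D : Date} (hd : 1 ≤ D.d) (ny nm : ℤ) :
    addPeriod D (ny, nm, 0) = addMonths D (12 * ny + nm) :=
  addDays_zero (addMonths_valid_s5 hd _)

lemma Date.lt_of_d_lt {y m d d' : ℤ} (h : d < d') : Date.lt ⟨y, m, d⟩ ⟨y, m, d'⟩ :=
  Or.inr (Or.inr ⟨rfl, rfl, h⟩)

lemma addMonths_jan_of_isLeap {y d : ℤ} (hy : isLeap y) (hd : 29 ≤ d) :
    addMonths ⟨y, 1, d⟩ 1 = ⟨y, 2, 29⟩ := by
  simp only [addMonths, Date.mk.injEq]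
  norm_num [nbdays_two_of_isLeap hy, hd]

/-- **Monotonicity of date-period addition is not strict**: there exist valid dates
`D1 < D2` and a period `P` with `D1 +P P = D2 +P P`; in particular for
`D1 = (2020, 1, 30)`, `D2 = (2020, 1, 31)`, `P = (0, 1, 0)`, both sums equal
`(2020, 2, 29)`. -/
theorem addPeriod_not_strict_mono :
    (∃ (D1 D2 : Date) (P : ℤ × ℤ × ℤ), D1.valid ∧ D2.valid ∧ Date.lt D1 D2 ∧
      addPeriod D1 P = addPeriod D2 P) ∧
    Date.lt ⟨2020, 1, 30⟩ ⟨2020, 1, 31⟩ ∧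
    addPeriod ⟨2020, 1, 30⟩ (0, 1, 0) = ⟨2020, 2, 29⟩ ∧
    addPeriod ⟨2020, 1, 31⟩ (0, 1, 0) = ⟨2020, 2, 29⟩ := by
  have hleap : isLeap 2020 := by norm_num [isLeap]
  have h30 : addPeriod ⟨2020, 1, 30⟩ (0, 1, 0) = ⟨2020, 2, 29⟩ := by
    rw [addPeriod_days_zero (by norm_num)]
    exact addMonths_jan_of_isLeap hleap (by norm_num)
  have h31 : addPeriod ⟨2020, 1, 31⟩ (0, 1, 0) = ⟨2020, 2, 29⟩ := by
    rw [addPeriod_days_zero (by norm_num)]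
    exact addMonths_jan_of_isLeap hleap (by norm_num)
  have hlt : Date.lt ⟨2020, 1, 30⟩ ⟨2020, 1, 31⟩ := Date.lt_of_d_lt (by norm_num)
  have hvalid : ∀ d, 1 ≤ d → d ≤ 31 → Date.valid ⟨2020, 1, d⟩ := fun d h1 h31 =>
    ⟨le_rfl, by norm_num, h1, by simpa [nbdays] using h31⟩
  exact ⟨⟨_, _, _, hvalid 30 (by norm_num) (by norm_num), hvalid 31 (by norm_num) le_rfl, hlt,
    h30.trans h31.symm⟩, hlt, h30, h31⟩
end
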